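/- Let ε ∈ {−1, 1} and let T, q¹, q², p_T, p₁, p₂ be real. Set Δ = (q²)² + e^{−2q¹} and define the transformed variables T' = T, p'_T = p_T, e^{q'¹} = e^{q¹}·Δ, q'² = q²/Δ, p'₁ = [((q²)² − e^{−2q¹})·p₁ + 2q²e^{−2q¹}·p₂]/Δ, p'₂ = 2q²p₁ − ((q²)² − e^{−2q¹})·p₂. Then C₁ evaluated at the primed variables equals C₂ at the unprimed variables, C₂ at the primed variables equals C₁ at the unprimed variables, and C₃ at the primed variables equals C₃ at the unprimed variables. -/
import Mathlib


/-- Martin's perennial `C₁` as a function of `(ε, T, q¹, q², p_T, p₁, p₂)`. -/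
noncomputable def C1 (ε T q1 q2 pT p1 p2 : ℝ) : ℝ :=
  -(ε / 2) * Real.exp T *
    ((Real.exp (-q1) + q2 ^ 2 * Real.exp q1) * (pT + p1) -
      2 * Real.exp (-q1) * p1 + 2 * q2 * Real.exp (-q1) * p2)

/-- Martin's perennial `C₂`. -/
noncomputable def C2 (ε T q1 q2 pT p1 p2 : ℝ) : ℝ :=
  -(ε / 2) * Real.exp T * (Real.exp q1 * (pT + p1))

/-- Martin's perennial `C₃`. -/
noncomputable def C3 (ε T q1 q2 pT p1 p2 : ℝ) : ℝ :=
  -(ε / 2) * Real.exp T * (q2 * Real.exp q1 * (pT + p1) + Real.exp (-q1) * p2)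

lemma aux_key (ε E a b q2 pT p1 p2 : ℝ) (hab : a * b = 1) :
    let Δ := q2 ^ 2 + b ^ 2
    let p1' := ((q2 ^ 2 - b ^ 2) * p1 + 2 * q2 * b ^ 2 * p2) / Δ
    let p2' := 2 * q2 * p1 - (q2 ^ 2 - b ^ 2) * p2
    (-(ε / 2) * E * (((a * Δ)⁻¹ + (q2 / Δ) ^ 2 * (a * Δ)) * (pT + p1') -
        2 * (a * Δ)⁻¹ * p1' + 2 * (q2 / Δ) * (a * Δ)⁻¹ * p2')
      = -(ε / 2) * E * (a * (pT + p1))) ∧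
    (-(ε / 2) * E * (a * Δ * (pT + p1'))
      = -(ε / 2) * E * ((b + q2 ^ 2 * a) * (pT + p1) - 2 * b * p1 + 2 * q2 * b * p2)) ∧
    (-(ε / 2) * E * ((q2 / Δ) * (a * Δ) * (pT + p1') + (a * Δ)⁻¹ * p2')
      = -(ε / 2) * E * (q2 * a * (pT + p1) + b * p2)) := by
  have ha : a ≠ 0 := fun h => by simp [h] at hab
  have hb : b = 1 / a := by field_simp; linarith [hab]
  subst hb
  have hΔ : q2 ^ 2 + (1 / a) ^ 2 > 0 := by positivity
  intro Δ p1' p2'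
  have hΔne : Δ ≠ 0 := ne_of_gt hΔ
  refine ⟨?_, ?_, ?_⟩ <;>
  · show _ = _
    simp only [p1', p2', Δ]
    field_simp
    ring

/-- The class-group transformation exchanging the two lattice
generators of the torus (with `Δ = (q²)² + e^{−2q¹}`, `T' = T`, `p'_T = p_T`,
`e^{q'¹} = e^{q¹}Δ`, `q'² = q²/Δ`,
`p'₁ = [((q²)² − e^{−2q¹})p₁ + 2q²e^{−2q¹}p₂]/Δ`,
`p'₂ = 2q²p₁ − ((q²)² − e^{−2q¹})p₂`) exchanges `C₁` and `C₂` and fixes `C₃`. -/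
theorem stmt11 (ε T q1 q2 pT p1 p2 : ℝ) (hε : ε = 1 ∨ ε = -1) :
    let Δ := q2 ^ 2 + Real.exp (-2 * q1)
    let T' := T
    let pT' := pT
    let q1' := Real.log (Real.exp q1 * Δ)
    let q2' := q2 / Δ
    let p1' := ((q2 ^ 2 - Real.exp (-2 * q1)) * p1 +
      2 * q2 * Real.exp (-2 * q1) * p2) / Δ
    let p2' := 2 * q2 * p1 - (q2 ^ 2 - Real.exp (-2 * q1)) * p2
    C1 ε T' q1' q2' pT' p1' p2' = C2 ε T q1 q2 pT p1 p2 ∧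
      C2 ε T' q1' q2' pT' p1' p2' = C1 ε T q1 q2 pT p1 p2 ∧
      C3 ε T' q1' q2' pT' p1' p2' = C3 ε T q1 q2 pT p1 p2 := by
  intro Δ T' pT' q1' q2' p1' p2'
  have hΔ : Δ > 0 := by positivity
  have hE : Real.exp q1 * Δ > 0 := by positivity
  have hq1' : Real.exp q1' = Real.exp q1 * Δ := Real.exp_log hE
  have hq1'' : Real.exp (-q1') = (Real.exp q1 * Δ)⁻¹ := by
    rw [Real.exp_neg, hq1']
  have h2 : Real.exp (-2 * q1) = Real.exp (-q1) ^ 2 := by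
    rw [← Real.exp_nat_mul]; ring_nf
  have hee : Real.exp q1 * Real.exp (-q1) = 1 := by
    rw [← Real.exp_add]; simp
  have key := aux_key ε (Real.exp T) (Real.exp q1) (Real.exp (-q1)) q2 pT p1 p2 hee
  simp only at key
  refine ⟨?_, ?_, ?_⟩ <;>
  · show _ = _
    simp only [C1, C2, C3, hq1', hq1'', T', pT', q2', p1', p2']
    simp only [Δ, h2] at *
    first
    | exact key.1
    | exact key.2.1
    | exact key.2.2
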